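/- arXiv:0904.3157 — 4 statements merged into one kernel-verified Lean document; each statement's English description precedes it below -/
import Mathlib

section
/- Let α be a finite type and F : Set α → Set α a monotone operator (S ⊆ T → F S ⊆ F T). Let J : ℕ → Set α be any 'asynchronous run' of F, i.e. J 0 = ∅ and J i ⊆ J (i+1) ⊆ J i ∪ F (J i) for all i. If at some stage m the run has reached a closed set, i.e. F (J m) ⊆ J m, then J m equals the least fixed point of F (equivalently, J m equals the inflationary fixpoint of F obtained from the synchronous sequence I 0 = ∅, I (i+1) = I i ∪ F (I i)). -/
theorem asynchronous_run_of_monotone_reaches_lfp {α : Type*} [Fintype α]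
    (F : Set α → Set α) (hmono : ∀ S T : Set α, S ⊆ T → F S ⊆ F T)
    (J : ℕ → Set α) (hJ0 : J 0 = ∅)
    (hJ : ∀ i, J i ⊆ J (i + 1) ∧ J (i + 1) ⊆ J i ∪ F (J i))
    (m : ℕ) (hm : F (J m) ⊆ J m)
    (I : ℕ → Set α) (hI0 : I 0 = ∅) (hIs : ∀ i, I (i + 1) = I i ∪ F (I i))
    (X : Set α) (hX : ∃ N : ℕ, ∀ j : ℕ, I (N + j) = X) :
    F (J m) = J m ∧ (∀ Y : Set α, F Y ⊆ Y → J m ⊆ Y) ∧ J m = X := by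
  -- J m is least among closed sets
  have hleast : ∀ Y : Set α, F Y ⊆ Y → J m ⊆ Y := by
    intro Y hY
    have : ∀ i, J i ⊆ Y := by
      intro i
      induction i with
      | zero => rw [hJ0]; exact Set.empty_subset _
      | succ i ih =>
        refine (hJ i).2.trans ?_
        exact Set.union_subset ih ((hmono _ _ ih).trans hY)
    exact this m
  -- F (J m) = J m
  have hfix : F (J m) = J m := by
    apply Set.Subset.antisymm hm
    -- F (J m) is also closed, so J m ⊆ F (J m)
    exact hleast (F (J m)) (hmono _ _ hm)
  refine ⟨hfix, hleast, ?_⟩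
  obtain ⟨N, hN⟩ := hX
  -- X is closed
  have hXN : I N = X := by simpa using hN 0
  have hXclosed : F X ⊆ X := by
    have h1 : I (N + 1) = X := hN 1
    have := hIs N
    rw [hXN, h1] at this
    exact Set.subset_union_right.trans_eq this.symm
  apply Set.Subset.antisymm (hleast X hXclosed)
  -- I i ⊆ J m for all i
  have : ∀ i, I i ⊆ J m := by
    intro i
    induction i with
    | zero => rw [hI0]; exact Set.empty_subset _
    | succ i ih =>
      rw [hIs i]
      exact Set.union_subset ih ((hmono _ _ ih).trans hm)
  rw [← hXN]; exact this N
end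

section
/- Let V be a finite linearly ordered type, G : SimpleGraph V a connected simple graph, and r : V a distinguished root (the requesting node). Define the operator F on subsets of V × V by: (x, y) ∈ F T iff either (G.Adj x y ∧ x = r), or (G.Adj x y, and no x' satisfies (x', y) ∈ T, and there exists w with (w, x) ∈ T and w ≠ y, and for all w' x', ((w', x') ∈ T ∧ G.Adj x' y) → x ≤ x'). Let ST be the inflationary fixpoint of F (the eventual value of I 0 = ∅, I (i+1) = I i ∪ F (I i)). Then: (1) every (x, y) ∈ ST satisfies G.Adj x y; (2) no x satisfies (x, r) ∈ ST; (3) for every y ≠ r there is exactly one x with (x, y) ∈ ST; and (4) the simple graph T on V with adjacency T.Adj a b ↔ ((a, b) ∈ ST ∨ (b, a) ∈ ST) is a spanning tree of G, i.e. T is connected and acyclic and every edge of T is an edge of G. -/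
/-!
Read `(x, y) ∈ ST` as "x is the parent of y". By induction on the stages, every stage of the
inflationary sequence is a partial tree hanging from `r`: its pairs are edges of `G`, the root has
no parent, no vertex has two parents (all children of `r` enter at stage 1, and later a vertex
gets only its least eligible neighbour as parent), and every vertex with a child is `r` or has a
parent. At the fixpoint, being `r` or having a parent propagates along the edges of `G`, so by
connectivity every vertex other than `r` has a parent. The stage at which a vertex receives its
parent strictly increases from parent to child; following parents down this rank reaches `r`,
and on a cycle the vertex of largest rank would have two distinct parents.
-/

open SimpleGraph

section ParentRank

variable {V : Type*} {P : Set (V × V)} {d : V → ℕ} {T : SimpleGraph V}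

theorem SimpleGraph.connected_of_forall_exists_parent {r : V}
    (hP : ∀ a b, (a, b) ∈ P → T.Adj a b) (hd : ∀ a b, (a, b) ∈ P → d a < d b)
    (hpar : ∀ y, y ≠ r → ∃ x, (x, y) ∈ P) : T.Connected := by
  refine (connected_iff_exists_forall_reachable T).2 ⟨r, fun v => ?_⟩
  induction v using (InvImage.wf d wellFounded_lt).induction with
  | _ v ih =>
    by_cases hvr : v = r
    · exact hvr ▸ Reachable.refl v
    obtain ⟨x, hx⟩ := hpar v hvr
    exact (ih x (hd x v hx)).trans (hP x v hx).reachable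

theorem SimpleGraph.isAcyclic_of_unique_parent
    (hT : ∀ a b, T.Adj a b → (a, b) ∈ P ∨ (b, a) ∈ P) (hd : ∀ a b, (a, b) ∈ P → d a < d b)
    (huniq : ∀ x₁ x₂ y, (x₁, y) ∈ P → (x₂, y) ∈ P → x₁ = x₂) : T.IsAcyclic := by
  classical
  intro v c hc
  obtain ⟨m, hm, hmax⟩ :=
    Set.exists_max_image _ d c.support.finite_toSet ⟨v, c.start_mem_support⟩
  set c' := c.rotate m hm
  have hc' : c'.IsCycle := hc.rotate hm
  have parent : ∀ u ∈ c'.support, T.Adj u m → (u, m) ∈ P := fun u hu hum =>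
    (hT u m hum).resolve_right fun h =>
      (hd m u h).not_ge (hmax u (by simpa [c'] using hu))
  exact hc'.snd_ne_penultimate <| huniq _ _ _
    (parent _ (c'.getVert_mem_support 1) (c'.adj_snd hc'.not_nil).symm)
    (parent _ (c'.getVert_mem_support _) (c'.adj_penultimate hc'.not_nil))

end ParentRank

section Inflationary

variable {α : Type*} (F : Set α → Set α)

def inflSeq : ℕ → Set α
  | 0 => ∅
  | i + 1 => inflSeq i ∪ F (inflSeq i)

theorem eq_inflSeq {I : ℕ → Set α} (h0 : I 0 = ∅) (hs : ∀ i, I (i + 1) = I i ∪ F (I i)) :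
    I = inflSeq F := by
  funext i
  induction i with
  | zero => exact h0
  | succ i ih => rw [hs, ih]; rfl

theorem monotone_inflSeq : Monotone (inflSeq F) :=
  monotone_nat_of_le_succ fun _ => Set.subset_union_left

variable {F}

theorem apply_subset_of_inflSeq_stable {N : ℕ} {S : Set α} (h : ∀ j, inflSeq F (N + j) = S) :
    F S ⊆ S :=
  calc F S = F (inflSeq F N) := by rw [← h 0]; rfl
    _ ⊆ inflSeq F (N + 1) := Set.subset_union_right
    _ = S := h 1

end Inflationary

section TreeStep

variable {V : Type*} [LinearOrder V] {G : SimpleGraph V} {r : V} {S T : Set (V × V)}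

def treeStep (G : SimpleGraph V) (r : V) (T : Set (V × V)) : Set (V × V) :=
  {p | (G.Adj p.1 p.2 ∧ p.1 = r) ∨
    (G.Adj p.1 p.2 ∧ (∀ x', (x', p.2) ∉ T) ∧ (∃ w, (w, p.1) ∈ T ∧ w ≠ p.2) ∧
      ∀ w' x', (w', x') ∈ T ∧ G.Adj x' p.2 → p.1 ≤ x')}

theorem mem_treeStep {x y : V} :
    (x, y) ∈ treeStep G r T ↔ (G.Adj x y ∧ x = r) ∨
      (G.Adj x y ∧ (∀ x', (x', y) ∉ T) ∧ (∃ w, (w, x) ∈ T ∧ w ≠ y) ∧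
        ∀ w' x', (w', x') ∈ T ∧ G.Adj x' y → x ≤ x') :=
  Iff.rfl

theorem eq_root_or_exists_of_mem_treeStep {x y : V} (h : (x, y) ∈ treeStep G r T) :
    x = r ∨ ∃ w, (w, x) ∈ T ∧ w ≠ y :=
  h.imp And.right fun h => h.2.2.1

structure IsPartialTree (G : SimpleGraph V) (r : V) (T : Set (V × V)) : Prop where
  adj : ∀ ⦃x y⦄, (x, y) ∈ T → G.Adj x y
  root_notMem : ∀ x, (x, r) ∉ T
  unique : ∀ ⦃x₁ x₂ y⦄, (x₁, y) ∈ T → (x₂, y) ∈ T → x₁ = x₂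
  root_or_exists_parent : ∀ ⦃a b⦄, (a, b) ∈ T → a = r ∨ ∃ c, (c, a) ∈ T

namespace IsPartialTree

variable (h : IsPartialTree G r T) (hroot : T.Nonempty → ∀ y, G.Adj r y → (r, y) ∈ T)
include h hroot

theorem eq_of_mem_treeStep_of_mem {x x' y : V} (hx : (x, y) ∈ treeStep G r T)
    (hx' : (x', y) ∈ T) : x = x' := by
  rcases mem_treeStep.1 hx with ⟨hxy, rfl⟩ | ⟨-, hnp, -⟩
  · exact h.unique (hroot ⟨_, hx'⟩ y hxy) hx'
  · exact (hnp x' hx').elim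

theorem eq_of_mem_treeStep {x₁ x₂ y : V} (h₁ : (x₁, y) ∈ treeStep G r T)
    (h₂ : (x₂, y) ∈ treeStep G r T) : x₁ = x₂ := by
  -- a root child enters before any other vertex gets a parent, so it is never offered a second one
  have root_child {x} (hx : (x, y) ∈ treeStep G r T) (hr : G.Adj r y) : x = r := by
    rcases mem_treeStep.1 hx with ⟨-, rfl⟩ | ⟨-, hnp, ⟨w, hw, -⟩, -⟩
    · rfl
    · exact (hnp r (hroot ⟨_, hw⟩ y hr)).elim
  rcases mem_treeStep.1 h₁ with ⟨hr, rfl⟩ | ⟨hx₁, -, ⟨w₁, hw₁, -⟩, hmin₁⟩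
  · exact (root_child h₂ hr).symm
  rcases mem_treeStep.1 h₂ with ⟨hr, rfl⟩ | ⟨hx₂, -, ⟨w₂, hw₂, -⟩, hmin₂⟩
  · exact root_child h₁ hr
  exact le_antisymm (hmin₁ w₂ x₂ ⟨hw₂, hx₂⟩) (hmin₂ w₁ x₁ ⟨hw₁, hx₁⟩)

theorem union_treeStep : IsPartialTree G r (T ∪ treeStep G r T) where
  adj := by
    rintro x y (hxy | hxy | hxy)
    exacts [h.adj hxy, hxy.1, hxy.1]
  root_notMem := by
    rintro x (hx | hx)
    · exact h.root_notMem x hx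
    rcases mem_treeStep.1 hx with ⟨hxr, rfl⟩ | ⟨hxr, -, ⟨w, hw, hwr⟩, -⟩
    · exact G.irrefl hxr
    · exact hwr (h.unique hw (hroot ⟨_, hw⟩ x hxr.symm))
  unique := by
    rintro x₁ x₂ y (h₁ | h₁) (h₂ | h₂)
    · exact h.unique h₁ h₂
    · exact (h.eq_of_mem_treeStep_of_mem hroot h₂ h₁).symm
    · exact h.eq_of_mem_treeStep_of_mem hroot h₁ h₂
    · exact h.eq_of_mem_treeStep hroot h₁ h₂
  root_or_exists_parent := by
    rintro a b (hab | hab)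
    · exact (h.root_or_exists_parent hab).imp_right fun ⟨c, hc⟩ => ⟨c, Or.inl hc⟩
    · exact (eq_root_or_exists_of_mem_treeStep hab).imp_right fun ⟨w, hw, _⟩ => ⟨w, Or.inl hw⟩

end IsPartialTree

theorem root_child_mem_inflSeq {i : ℕ} (hi : i ≠ 0) {y : V} (hy : G.Adj r y) :
    (r, y) ∈ inflSeq (treeStep G r) i :=
  monotone_inflSeq _ (Nat.one_le_iff_ne_zero.2 hi) (Or.inr (Or.inl ⟨hy, rfl⟩))

theorem isPartialTree_inflSeq (i : ℕ) : IsPartialTree G r (inflSeq (treeStep G r) i) := by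
  induction i with
  | zero => exact ⟨nofun, nofun, nofun, nofun⟩
  | succ i ih =>
    refine ih.union_treeStep fun hne y hy => root_child_mem_inflSeq ?_ hy
    rintro rfl
    exact hne.ne_empty rfl

-- The root never gets a parent, so its stage is `sInf ∅ = 0`.
noncomputable def parentStage (S : ℕ → Set (V × V)) (v : V) : ℕ :=
  sInf {i | ∃ x, (x, v) ∈ S i}

theorem parentStage_lt {n : ℕ} {x y : V} (hxy : (x, y) ∈ inflSeq (treeStep G r) n) :
    parentStage (inflSeq (treeStep G r)) x < parentStage (inflSeq (treeStep G r)) y := by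
  set I := inflSeq (treeStep G r)
  obtain ⟨x', hx'⟩ : ∃ x', (x', y) ∈ I (parentStage I y) := Nat.sInf_mem (s := {i | ∃ x', (x', y) ∈ I i}) ⟨n, x, hxy⟩
  have hle : parentStage I y ≤ n := Nat.sInf_le ⟨x, hxy⟩
  obtain rfl : x' = x :=
    (isPartialTree_inflSeq n).unique (monotone_inflSeq _ hle hx') hxy
  obtain ⟨k, hk⟩ : ∃ k, parentStage I y = k + 1 := by
    refine ⟨parentStage I y - 1, (Nat.succ_pred_eq_of_ne_zero fun h0 => ?_).symm⟩
    rw [h0] at hx'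
    exact hx'
  rw [hk] at hx'
  rcases hx' with hx' | hx'
  · have : parentStage I y ≤ k := Nat.sInf_le ⟨x', hx'⟩
    omega
  rcases eq_root_or_exists_of_mem_treeStep hx' with rfl | ⟨w, hw, -⟩
  · have : parentStage I x' = 0 := Nat.sInf_eq_zero.2 <| Or.inr <|
      Set.eq_empty_of_forall_notMem fun i ⟨w, hw⟩ => (isPartialTree_inflSeq i).root_notMem w hw
    omega
  · have : parentStage I x' ≤ k := Nat.sInf_le ⟨w, hw⟩
    omega

namespace IsPartialTree

variable (h : IsPartialTree G r S) (hclosed : treeStep G r S ⊆ S)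
include h hclosed

theorem root_or_exists_parent_of_adj [Finite V] {u v : V} (hu : u = r ∨ ∃ x, (x, u) ∈ S)
    (huv : G.Adj u v) : v = r ∨ ∃ x, (x, v) ∈ S := by
  by_contra! hv
  obtain ⟨hvr, hnp⟩ := hv
  by_cases hrv : G.Adj r v
  · exact hnp r (hclosed (Or.inl ⟨hrv, rfl⟩))
  -- the least neighbour of `v` that has a parent qualifies as the parent of `v`
  have hu' : u ∈ {x' | (∃ w, (w, x') ∈ S) ∧ G.Adj x' v} :=
    ⟨hu.resolve_left (by rintro rfl; exact hrv huv), huv⟩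
  obtain ⟨m, ⟨⟨w, hwm⟩, hmv⟩, hmin⟩ := Set.exists_min_image _ id (Set.toFinite _) ⟨u, hu'⟩
  have hwv : w ≠ v := by
    rintro rfl
    exact (h.root_or_exists_parent hwm).elim hvr fun ⟨c, hc⟩ => hnp c hc
  exact hnp m <| hclosed <| Or.inr
    ⟨hmv, hnp, ⟨w, hwm, hwv⟩, fun w' x' ⟨hw', hx'⟩ => hmin x' ⟨⟨w', hw'⟩, hx'⟩⟩

theorem exists_parent [Finite V] (hG : G.Preconnected) {y : V} (hy : y ≠ r) :
    ∃ x, (x, y) ∈ S := by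
  suffices ∀ v, Relation.ReflTransGen G.Adj r v → v = r ∨ ∃ x, (x, v) ∈ S from
    (this y ((reachable_iff_reflTransGen r y).1 (hG r y))).resolve_left hy
  intro v hv
  induction hv with
  | refl => exact Or.inl rfl
  | tail _ huv ih => exact h.root_or_exists_parent_of_adj hclosed ih huv

end IsPartialTree

end TreeStep

theorem spanning_tree_fixpoint {V : Type*} [Fintype V] [LinearOrder V]
    (G : SimpleGraph V) (hG : G.Connected) (r : V)
    (F : Set (V × V) → Set (V × V))
    (hF : ∀ (T : Set (V × V)) (x y : V),
      (x, y) ∈ F T ↔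
        (G.Adj x y ∧ x = r) ∨
        (G.Adj x y ∧ (∀ x' : V, (x', y) ∉ T) ∧
          (∃ w : V, (w, x) ∈ T ∧ w ≠ y) ∧
          (∀ w' x' : V, ((w', x') ∈ T ∧ G.Adj x' y) → x ≤ x')))
    (I : ℕ → Set (V × V)) (hI0 : I 0 = ∅)
    (hIs : ∀ i, I (i + 1) = I i ∪ F (I i))
    (ST : Set (V × V)) (hST : ∃ N : ℕ, ∀ j : ℕ, I (N + j) = ST)
    (T : SimpleGraph V)
    (hT : ∀ a b : V, T.Adj a b ↔ ((a, b) ∈ ST ∨ (b, a) ∈ ST)) :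
    (∀ x y : V, (x, y) ∈ ST → G.Adj x y) ∧
    (∀ x : V, (x, r) ∉ ST) ∧
    (∀ y : V, y ≠ r → ∃! x : V, (x, y) ∈ ST) ∧
    (T.Connected ∧ T.IsAcyclic ∧ T ≤ G) := by
  obtain rfl : F = treeStep G r := funext fun S => Set.ext fun p => hF S p.1 p.2
  obtain rfl : I = inflSeq (treeStep G r) := eq_inflSeq _ hI0 hIs
  obtain ⟨N, hN⟩ := hST
  have hSTN : inflSeq (treeStep G r) N = ST := hN 0
  have hpt : IsPartialTree G r ST := hSTN ▸ isPartialTree_inflSeq N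
  have hparent : ∀ y, y ≠ r → ∃ x, (x, y) ∈ ST := fun y hy =>
    hpt.exists_parent (apply_subset_of_inflSeq_stable hN) hG.preconnected hy
  have hstage : ∀ x y, (x, y) ∈ ST → parentStage (inflSeq (treeStep G r)) x <
      parentStage (inflSeq (treeStep G r)) y := fun x y hxy => parentStage_lt (hSTN ▸ hxy)
  refine ⟨fun x y => @hpt.adj x y, hpt.root_notMem, fun y hy => ?_,
    connected_of_forall_exists_parent (fun a b h => (hT a b).2 (Or.inl h)) hstage hparent,
    isAcyclic_of_unique_parent (fun a b => (hT a b).1) hstage fun _ _ _ => @hpt.unique _ _ _,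
    fun a b hab => ((hT a b).1 hab).elim (@hpt.adj a b) fun h => (hpt.adj h).symm⟩
  obtain ⟨x, hx⟩ := hparent y hy
  exact ⟨x, hx, fun x' hx' => hpt.unique hx' hx⟩
end

section
/- Let V be a finite type, G : SimpleGraph V a connected simple graph, and d : V a fixed destination. Define the operator F on subsets of V × V (pairs (x, h), read 'h is a next hop from x towards d') by: (x, h) ∈ F T iff G.Adj x h and either h = d, or ((∃ z, (h, z) ∈ T ∧ z ≠ x) ∧ ∀ u, (x, u) ∉ T). Let T∞ be the inflationary fixpoint of F (the eventual value of I 0 = ∅, I (i+1) = I i ∪ F (I i)). Then: (1) for every x ≠ d there exists h with (x, h) ∈ T∞; and (2) for every (x, h) ∈ T∞ we have G.Adj x h, and there exist m : ℕ and a sequence x_0 = x, x_1 = h, …, x_m = d with (x_i, x_{i+1}) ∈ T∞ for all i < m; i.e. following next hops from any routing-table entry leads to the destination d. -/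
theorem table_based_routing_fixpoint {V : Type*} [Fintype V]
    (G : SimpleGraph V) (hG : G.Connected) (d : V)
    (F : Set (V × V) → Set (V × V))
    (hF : ∀ (T : Set (V × V)) (x h : V),
      (x, h) ∈ F T ↔
        G.Adj x h ∧ (h = d ∨ ((∃ z : V, (h, z) ∈ T ∧ z ≠ x) ∧ ∀ u : V, (x, u) ∉ T)))
    (I : ℕ → Set (V × V)) (hI0 : I 0 = ∅)
    (hIs : ∀ i, I (i + 1) = I i ∪ F (I i))
    (Tinf : Set (V × V)) (hTinf : ∃ N : ℕ, ∀ j : ℕ, I (N + j) = Tinf) :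
    (∀ x : V, x ≠ d → ∃ h : V, (x, h) ∈ Tinf) ∧
    (∀ x h : V, (x, h) ∈ Tinf →
      G.Adj x h ∧
      ∃ (m : ℕ) (c : ℕ → V), c 0 = x ∧ c 1 = h ∧ c m = d ∧
        ∀ i < m, (c i, c (i + 1)) ∈ Tinf) := by
  obtain ⟨N, hN⟩ := hTinf
  have hstep : ∀ i, I i ⊆ I (i + 1) := by
    intro i; rw [hIs]; exact Set.subset_union_left
  have hmono : Monotone I := monotone_nat_of_le_succ hstep
  have hIN : I N = Tinf := by simpa using hN 0
  have hsub : ∀ i, I i ⊆ Tinf := by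
    intro i
    have : I i ⊆ I (N + i) := hmono (Nat.le_add_left i N)
    rwa [hN i] at this
  have hFsub : F Tinf ⊆ Tinf := by
    have h2 : I (N + 1) = Tinf := hN 1
    rw [hIs N, hIN] at h2
    intro p hp
    rw [← h2]; exact Or.inr hp
  have key : ∀ i x h, (x, h) ∈ I i → G.Adj x h ∧
      ∃ (m : ℕ) (c : ℕ → V), c 0 = x ∧ c 1 = h ∧ c m = d ∧
        ∀ j < m, (c j, c (j + 1)) ∈ Tinf := by
    intro i
    induction i with
    | zero => intro x h hx; rw [hI0] at hx; exact absurd hx (Set.notMem_empty _)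
    | succ i ih =>
      intro x h hx
      rw [hIs] at hx
      rcases hx with hx | hx
      · exact ih x h hx
      · have hmem : (x, h) ∈ Tinf := hsub (i + 1) (by rw [hIs]; exact Or.inr hx)
        rw [hF] at hx
        obtain ⟨hadj, hcase⟩ := hx
        refine ⟨hadj, ?_⟩
        rcases hcase with rfl | ⟨⟨z, hz, hzx⟩, hnox⟩
        · refine ⟨1, fun n => if n = 0 then x else h, rfl, rfl, rfl, ?_⟩
          intro j hj
          interval_cases j
          simpa using hmem
        · obtain ⟨_, m', c', hc0, hc1, hcm, hchain⟩ := ih h z hz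
          refine ⟨m' + 1, fun n => if n = 0 then x else c' (n - 1), rfl, by simpa using hc0,
            by simp [hcm], ?_⟩
          intro j hj
          match j with
          | 0 => simpa [hc0] using hmem
          | (k + 1) =>
            have hk : k < m' := by omega
            simpa using hchain k hk
  have nbr : ∀ x w, x ≠ d → G.Adj x w → (w = d ∨ ∃ z, (w, z) ∈ Tinf) →
      ∃ h, (x, h) ∈ Tinf := by
    intro x w hxd hadj hw
    by_cases hx : ∃ u, (x, u) ∈ Tinf
    · exact hx
    · push_neg at hx
      by_cases hwd : w = d
      · exact ⟨w, hFsub (by rw [hF]; exact ⟨hadj, Or.inl hwd⟩)⟩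
      · rcases hw with rfl | ⟨z, hz⟩
        · exact absurd rfl hwd
        · have hzx : z ≠ x := by
            intro hzxeq
            have hTN : (w, z) ∈ I N := by rw [hIN]; exact hz
            obtain ⟨_, m, c, hc0, hc1, hcm, hchain⟩ := key N w z hTN
            have hm0 : m ≠ 0 := by rintro rfl; exact hwd (hc0.symm.trans hcm)
            have hm1 : m ≠ 1 := by
              rintro rfl; exact hxd (hzxeq ▸ (hc1.symm.trans hcm))
            have h12 : (c 1, c 2) ∈ Tinf := hchain 1 (by omega)
            exact hx (c 2) (by rw [hc1, hzxeq] at h12; exact h12)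
          exact ⟨w, hFsub (by rw [hF]; exact ⟨hadj, Or.inr ⟨⟨z, hz, hzx⟩, hx⟩⟩)⟩
  constructor
  · have walkP : ∀ (u v : V) (p : G.Walk u v), v = d → u ≠ d → ∃ h, (u, h) ∈ Tinf := by
      intro u v p
      induction p with
      | nil => intro hv hu; exact absurd hv hu
      | @cons a b c hab p ih =>
        intro hv hu
        by_cases hbd : b = d
        · exact nbr a b hu hab (Or.inl hbd)
        · obtain ⟨h, hh⟩ := ih hv hbd
          exact nbr a b hu hab (Or.inr ⟨h, hh⟩)
    intro x hx
    exact (hG.preconnected x d).elim fun p => walkP x d p rfl hx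
  · intro x h hxh
    have : (x, h) ∈ I N := by rw [hIN]; exact hxh
    exact key N x h this
end

section
/- Let V be a finite type, G : SimpleGraph V a connected simple graph, r d : V with r ≠ d (r the requesting node, d the destination). Define the operator F on subsets of V × V (pairs (x, y), read 'y received the route request from x') by: (x, y) ∈ F R iff G.Adj x y and either x = r, or ((∃ w, (w, x) ∈ R ∧ w ≠ y) ∧ x ≠ d ∧ ∀ w', (w', y) ∉ R). Let R∞ be the inflationary fixpoint of F (the eventual value of I 0 = ∅, I (i+1) = I i ∪ F (I i)). Then for every vertex y ≠ r for which there exists a walk r = v_0, v_1, …, v_m = y in G (G.Adj v_i v_{i+1} for all i < m, m ≥ 1) whose internal vertices avoid the destination (v_i ≠ d for all 0 < i < m), there exists x with (x, y) ∈ R∞; i.e. the route-request flooding reaches every such node. -/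
theorem route_request_flooding_reaches {V : Type*} [Fintype V]
    (G : SimpleGraph V) (hG : G.Connected) (r d : V) (hrd : r ≠ d)
    (F : Set (V × V) → Set (V × V))
    (hF : ∀ (R : Set (V × V)) (x y : V),
      (x, y) ∈ F R ↔
        G.Adj x y ∧
          (x = r ∨ ((∃ w : V, (w, x) ∈ R ∧ w ≠ y) ∧ x ≠ d ∧ ∀ w' : V, (w', y) ∉ R)))
    (I : ℕ → Set (V × V)) (hI0 : I 0 = ∅)
    (hIs : ∀ i, I (i + 1) = I i ∪ F (I i))
    (Rinf : Set (V × V)) (hRinf : ∃ N : ℕ, ∀ j : ℕ, I (N + j) = Rinf) :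
    ∀ y : V, y ≠ r →
      (∃ (m : ℕ) (v : ℕ → V), 1 ≤ m ∧ v 0 = r ∧ v m = y ∧
        (∀ i < m, G.Adj (v i) (v (i + 1))) ∧
        (∀ i : ℕ, 0 < i → i < m → v i ≠ d)) →
      ∃ x : V, (x, y) ∈ Rinf := by
  obtain ⟨N, hN⟩ := hRinf
  -- monotonicity
  have mono : ∀ n k, I n ⊆ I (n + k) := by
    intro n k
    induction k with
    | zero => exact subset_rfl
    | succ k ih =>
      rw [show n + (k+1) = (n+k) + 1 from rfl, hIs (n+k)]
      exact ih.trans Set.subset_union_left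
  have sub : ∀ n, I n ⊆ Rinf := by
    intro n
    rcases le_or_gt n N with h | h
    · have : I n ⊆ I (n + (N - n)) := mono n (N - n)
      rwa [Nat.add_sub_cancel' h, show I N = Rinf from by simpa using hN 0] at this
    · rw [show n = N + (n - N) from (Nat.add_sub_cancel' h.le).symm, hN]
  have hFsub : F Rinf ⊆ Rinf := by
    have h := hIs N
    rw [show I N = Rinf from by simpa using hN 0,
        show I (N+1) = Rinf from hN 1] at h
    intro p hp
    rw [h]; exact Or.inr hp
  -- Lemma C: everything in Rinf with source ≠ r has a predecessor
  have pred : ∀ a b, (a, b) ∈ Rinf → a ≠ r → ∃ w, (w, a) ∈ Rinf := by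
    have : ∀ n a b, (a, b) ∈ I n → a ≠ r → ∃ w, (w, a) ∈ Rinf := by
      intro n
      induction n with
      | zero => intro a b h; rw [hI0] at h; exact absurd h (Set.notMem_empty _)
      | succ n ih =>
        intro a b h har
        rw [hIs n] at h
        rcases h with h | h
        · exact ih a b h har
        · rw [hF] at h
          rcases h.2 with h' | h'
          · exact absurd h' har
          · obtain ⟨w, hw, _⟩ := h'.1
            exact ⟨w, sub n hw⟩
    intro a b h har
    exact this N a b (by rw [show I N = Rinf from by simpa using hN 0]; exact h) har
  -- main induction on walk length
  have key : ∀ m, ∀ y : V, y ≠ r → ∀ v : ℕ → V, v 0 = r → v m = y →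
      (∀ i < m, G.Adj (v i) (v (i + 1))) →
      (∀ i : ℕ, 0 < i → i < m → v i ≠ d) → 1 ≤ m → ∃ x, (x, y) ∈ Rinf := by
    intro m
    induction m using Nat.strong_induction_on with
    | _ m ih =>
      intro y hy v hv0 hvm hadj hint hm
      by_cases hadjry : G.Adj r y
      · exact ⟨r, hFsub (by rw [hF]; exact ⟨hadjry, Or.inl rfl⟩)⟩
      · -- then m ≥ 2 and v (m-1) ≠ r
        have hm2 : 2 ≤ m := by
          by_contra h
          push_neg at h
          interval_cases m
          · exact hadjry (by rw [← hv0, ← hvm]; exact hadj 0 (by norm_num))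
        set x := v (m - 1) with hx
        have hxr : x ≠ r := by
          intro hxr
          apply hadjry
          have := hadj (m - 1) (by omega)
          rwa [show m - 1 + 1 = m from by omega, hvm, ← hx, hxr] at this
        have hxd : x ≠ d := hint (m - 1) (by omega) (by omega)
        obtain ⟨w, hw⟩ := ih (m - 1) (by omega) x hxr v hv0 rfl
          (fun i hi => hadj i (by omega)) (fun i h1 h2 => hint i h1 (by omega)) (by omega)
        by_cases hy' : ∃ w', (w', y) ∈ Rinf
        · exact hy'
        · push_neg at hy'
          have hwy : w ≠ y := by
            intro hwy
            obtain ⟨w'', hw''⟩ := pred w x hw (hwy ▸ hy)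
            exact hy' w'' (hwy ▸ hw'')
          have hadjxy : G.Adj x y := by
            have := hadj (m - 1) (by omega)
            rwa [show m - 1 + 1 = m from by omega, hvm] at this
          exact ⟨x, hFsub (by rw [hF]; exact ⟨hadjxy, Or.inr ⟨⟨w, hw, hwy⟩, hxd, hy'⟩⟩)⟩
  intro y hy h
  obtain ⟨m, v, hm, hv0, hvm, hadj, hint⟩ := h
  exact key m y hy v hv0 hvm hadj hint hm
end
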